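/- arXiv:2007.07933 — 2 statements merged into one kernel-verified Lean document; each statement's English description precedes it below -/
import Mathlib

section
/- Simplex constraint polynomial extension: let Z(x) = {z ∈ ℝ^p : z ≥ l(x), 𝟙ᵀz ≤ u(x)} where l : ℝ^n → ℝ^p and u : ℝ^n → ℝ are polynomials with 𝟙ᵀl(x) ≤ u(x) for all x ∈ U. Fix x̂ ∈ U and ẑ ∈ Z(x̂), and set c_j = (ẑ_j - l_j(x̂))/(u(x̂) - 𝟙ᵀl(x̂)) if u(x̂) > 𝟙ᵀl(x̂) and c_j = 0 otherwise, and q_j(x) = c_j(u(x) - 𝟙ᵀl(x)) + l_j(x). Then q(x̂) = ẑ, and for all x ∈ U: q(x) ≥ l(x) and 𝟙ᵀq(x) ≤ u(x), i.e., q(x) ∈ Z(x). -/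
/-- Simplex constraint polynomial extension. With
`Z(x) = {z : z ≥ l(x), 𝟙ᵀz ≤ u(x)}`, `𝟙ᵀl(x) ≤ u(x)` on `U`, `x̂ ∈ U`,
`ẑ ∈ Z(x̂)`, `c_j = (ẑ_j - l_j(x̂))/(u(x̂) - 𝟙ᵀl(x̂))` (or `0` if
`u(x̂) = 𝟙ᵀl(x̂)`), and `q_j(x) = c_j (u(x) - 𝟙ᵀl(x)) + l_j(x)`, one has
`q(x̂) = ẑ`, and `q(x) ≥ l(x)`, `𝟙ᵀq(x) ≤ u(x)` for all `x ∈ U`. -/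
theorem stmt_6 {n p : ℕ}
    (U : Set (Fin n → ℝ))
    (l : (Fin n → ℝ) → Fin p → ℝ)
    (u : (Fin n → ℝ) → ℝ)
    (hlu : ∀ x ∈ U, (∑ j, l x j) ≤ u x)
    (xh : Fin n → ℝ) (hxh : xh ∈ U)
    (zh : Fin p → ℝ)
    (hzh : (∀ j, l xh j ≤ zh j) ∧ (∑ j, zh j) ≤ u xh)
    (c : Fin p → ℝ)
    (hc : ∀ j, c j =
      if (∑ i, l xh i) < u xh then (zh j - l xh j) / (u xh - ∑ i, l xh i) else 0)
    (q : (Fin n → ℝ) → Fin p → ℝ)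
    (hq : ∀ x j, q x j = c j * (u x - ∑ i, l x i) + l x j) :
    q xh = zh ∧
    ∀ x ∈ U, (∀ j, l x j ≤ q x j) ∧ (∑ j, q x j) ≤ u x := by
  have hS0 : (∑ i, l xh i) ≤ u xh := hlu xh hxh
  have hcnn : ∀ j, 0 ≤ c j := by
    intro j
    rw [hc j]
    split_ifs with h
    · exact div_nonneg (by linarith [hzh.1 j]) (by linarith)
    · exact le_refl 0
  have hcsum : (∑ j, c j) ≤ 1 := by
    by_cases h : (∑ i, l xh i) < u xh
    · have : (∑ j, c j) = (∑ j, zh j - ∑ j, l xh j) / (u xh - ∑ i, l xh i) := by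
        simp only [hc, if_pos h, div_eq_mul_inv, ← Finset.sum_mul, Finset.sum_sub_distrib]
      rw [this]
      rw [div_le_one (by linarith)]
      linarith [hzh.2]
    · have : ∀ j, c j = 0 := fun j => by rw [hc j, if_neg h]
      simp [this]
  constructor
  · funext j
    rw [hq xh j]
    by_cases h : (∑ i, l xh i) < u xh
    · rw [hc j, if_pos h, div_mul_cancel₀ _ (by linarith : u xh - ∑ i, l xh i ≠ 0)]
      ring
    · have heq : u xh = ∑ i, l xh i := le_antisymm (not_lt.mp h) hS0
      have hz : zh j = l xh j := by
        -- pointwise lh ≤ zh and sums equalish force equality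
        have h1 : ∀ i, l xh i ≤ zh i := hzh.1
        have h2 : (∑ i, zh i) ≤ ∑ i, l xh i := by rw [← heq]; exact hzh.2
        have h3 : (∑ i, l xh i) ≤ ∑ i, zh i :=
          Finset.sum_le_sum (fun i _ => h1 i)
        have hsum : (∑ i, zh i) = ∑ i, l xh i := le_antisymm h2 h3
        have := (Finset.sum_eq_sum_iff_of_le (fun i _ => h1 i)).mp hsum.symm
        exact (this j (Finset.mem_univ j)).symm
      rw [hc j, if_neg h, hz, heq]
      ring
  · intro x hx
    have hS : (∑ i, l x i) ≤ u x := hlu x hx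
    constructor
    · intro j
      rw [hq x j]
      nlinarith [hcnn j]
    · have : (∑ j, q x j) = (∑ j, c j) * (u x - ∑ i, l x i) + ∑ j, l x j := by
        simp only [hq, Finset.sum_add_distrib, Finset.sum_mul]
      rw [this]
      nlinarith
end

section
/- Transformed box extension: let A ∈ ℝ^{m×p} have full row rank with m ≤ p, and Z(x) = {z ∈ ℝ^p : l(x) ≤ Az ≤ u(x)} with l(x) ≤ u(x) on U. Extend the rows of A to an invertible matrix B ∈ ℝ^{p×p} whose first m rows are those of A. Fix x̂ ∈ U, ŷ ∈ ℝ^p, and ẑ ∈ Z(x̂); set q'_j(x,y) = μ_j l_j(x) + (1-μ_j) u_j(x) for j ≤ m with μ_j = (u_j(x̂) - (Bẑ)_j)/(u_j(x̂) - l_j(x̂)) (μ_j = 0 if u_j(x̂) = l_j(x̂)), and q'_j(x,y) = (By)_j for j > m. Then q(x,y) = B^{-1}q'(x,y) satisfies q(x,y) ∈ Z(x) for all (x,y) ∈ U × ℝ^p, and q(x̂,ẑ) = ẑ. -/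
open Matrix

/-- Transformed box extension. `A` has full row rank, `B` is
invertible with first `m` rows equal to those of `A`,
`Z(x) = {z : l(x) ≤ A z ≤ u(x)}`, `l(x) ≤ u(x)` on `U`. Define
`q'_j(x,y) = μ_j l_j(x) + (1-μ_j) u_j(x)` for `j < m` (with
`μ_j = (u_j(x̂) - (Bẑ)_j)/(u_j(x̂) - l_j(x̂))`, or `0` when
`u_j(x̂) = l_j(x̂)`) and `q'_j(x,y) = (By)_j` for `j ≥ m`, and
`q(x,y) = B⁻¹ q'(x,y)`. Then `q(x̂,ẑ) = ẑ` and `q(x,y) ∈ Z(x)` for all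
`x ∈ U` and all `y`. -/
theorem stmt_9 {n m p : ℕ} (hm : m ≤ p)
    (A : Matrix (Fin m) (Fin p) ℝ)
    (hArank : A.rank = m)
    (B Binv : Matrix (Fin p) (Fin p) ℝ)
    (hB1 : B * Binv = 1) (hB2 : Binv * B = 1)
    (hBA : ∀ (i : Fin m) (k : Fin p), B (Fin.castLE hm i) k = A i k)
    (U : Set (Fin n → ℝ))
    (l u : (Fin n → ℝ) → Fin m → ℝ)
    (hlu : ∀ x ∈ U, ∀ j, l x j ≤ u x j)
    (xh : Fin n → ℝ) (hxh : xh ∈ U)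
    (zh : Fin p → ℝ)
    (hzh : ∀ j, l xh j ≤ (A *ᵥ zh) j ∧ (A *ᵥ zh) j ≤ u xh j)
    (mu : Fin m → ℝ)
    (hmu : ∀ j, mu j =
      if l xh j < u xh j
      then (u xh j - (B *ᵥ zh) (Fin.castLE hm j)) / (u xh j - l xh j) else 0)
    (q' : (Fin n → ℝ) → (Fin p → ℝ) → Fin p → ℝ)
    (hq' : ∀ x y (j : Fin p), q' x y j =
      if h : (j : ℕ) < m
      then mu ⟨j, h⟩ * l x ⟨j, h⟩ + (1 - mu ⟨j, h⟩) * u x ⟨j, h⟩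
      else (B *ᵥ y) j)
    (q : (Fin n → ℝ) → (Fin p → ℝ) → Fin p → ℝ)
    (hq : ∀ x y, q x y = Binv *ᵥ q' x y) :
    q xh zh = zh ∧
    ∀ x ∈ U, ∀ y : Fin p → ℝ, ∀ j,
      l x j ≤ (A *ᵥ q x y) j ∧ (A *ᵥ q x y) j ≤ u x j := by

  have hAB : ∀ (v : Fin p → ℝ) (j : Fin m),
      (A *ᵥ v) j = (B *ᵥ v) (Fin.castLE hm j) := by
    intro v j
    simp [mulVec, dotProduct, hBA]
  have hq'top : ∀ x y (j : Fin m), q' x y (Fin.castLE hm j) =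
      mu j * l x j + (1 - mu j) * u x j := by
    intro x y j
    rw [hq']
    have h : ((Fin.castLE hm j : Fin p) : ℕ) < m := j.isLt
    rw [dif_pos h]
    simp
  have hmu01 : ∀ j : Fin m, 0 ≤ mu j ∧ mu j ≤ 1 := by
    intro j
    have hz := hzh j
    rw [hAB zh j] at hz
    rw [hmu j]
    by_cases hlt : l xh j < u xh j
    · rw [if_pos hlt]
      constructor
      · apply div_nonneg <;> linarith [hz.2]
      · rw [div_le_one (by linarith)]
        linarith [hz.1]
    · rw [if_neg hlt]; norm_num
  have hBq : ∀ x y, B *ᵥ q x y = q' x y := by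
    intro x y
    rw [hq, mulVec_mulVec, hB1, one_mulVec]
  constructor
  · have key : q' xh zh = B *ᵥ zh := by
      funext j
      rcases lt_or_ge (j : ℕ) m with h | h
      · show q' xh zh (Fin.castLE hm ⟨(j : ℕ), h⟩) =
          (B *ᵥ zh) (Fin.castLE hm ⟨(j : ℕ), h⟩)
        rw [hq'top, hmu ⟨(j : ℕ), h⟩]
        have hz := hzh ⟨(j : ℕ), h⟩
        rw [hAB zh ⟨(j : ℕ), h⟩] at hz
        have hcz : (B *ᵥ zh) (Fin.castLE hm ⟨(j : ℕ), h⟩) = (B *ᵥ zh) j := rfl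
        rw [hcz] at hz
        by_cases hlt : l xh ⟨(j : ℕ), h⟩ < u xh ⟨(j : ℕ), h⟩
        · rw [if_pos hlt]
          have hne : u xh ⟨(j : ℕ), h⟩ - l xh ⟨(j : ℕ), h⟩ ≠ 0 := by linarith
          field_simp
          ring
        · rw [if_neg hlt]
          push_neg at hlt
          have heq : l xh ⟨(j : ℕ), h⟩ = u xh ⟨(j : ℕ), h⟩ :=
            le_antisymm (hlu xh hxh ⟨(j : ℕ), h⟩) hlt
          norm_num
          linarith [hz.1, hz.2]
      · rw [hq', dif_neg (by omega)]
    rw [hq, key, mulVec_mulVec, hB2, one_mulVec]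
  · intro x hx y j
    rw [hAB (q x y) j, hBq, hq'top]
    have h01 := hmu01 j
    have hl := hlu x hx j
    constructor <;> nlinarith [h01.1, h01.2, hl]
end
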